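/- Let G, c > 0 be real constants, ρ : ℝ³ → ℝ continuous, and Φ : ℝ³ → ℝ three times continuously differentiable with Φ > 0 everywhere, satisfying the Prague field equation ΔΦ = (4πG/c²)·[ρ·Φ + (c²/(8πG))·‖∇Φ‖²/Φ] on ℝ³. Define the tensor field t_{ab} := (c²/(4πG))·(1/Φ)·[∂_aΦ·∂_bΦ − (1/2)·δ_{ab}·‖∇Φ‖²] for a,b ∈ {1,2,3}. Then for each index a and every x ∈ ℝ³, Σ_{b=1}^{3} ∂_b t_{ab}(x) = ρ(x)·∂_aΦ(x); i.e., the gravitational force density f_a = −ρ·∂_aΦ is the negative divergence of the symmetric tensor t_{ab}. -/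

import Mathlib

open Real

/-- The `i`-th partial derivative of a function on Euclidean `ℝ³`. -/
noncomputable def pderiv3 (i : Fin 3) (f : EuclideanSpace ℝ (Fin 3) → ℝ)
    (x : EuclideanSpace ℝ (Fin 3)) : ℝ :=
  fderiv ℝ f x (EuclideanSpace.single i 1)

/-- The Euclidean Laplacian on `ℝ³`. -/
noncomputable def lap3 (f : EuclideanSpace ℝ (Fin 3) → ℝ)
    (x : EuclideanSpace ℝ (Fin 3)) : ℝ :=
  ∑ i, pderiv3 i (pderiv3 i f) x

/-- The squared norm of the gradient, `‖∇f‖²`, on `ℝ³`. -/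
noncomputable def gradSq3 (f : EuclideanSpace ℝ (Fin 3) → ℝ)
    (x : EuclideanSpace ℝ (Fin 3)) : ℝ :=
  ∑ i, (pderiv3 i f x) ^ 2

/-! For every `C²` function `Φ` that does not vanish at `x`, the product rule gives
`∑_b ∂_b [Φ⁻¹ (∂_aΦ ∂_bΦ - ½ δ_{ab} ‖∇Φ‖²)] = ∂_aΦ (ΔΦ/Φ - ‖∇Φ‖²/(2Φ²))`:
the terms `Φ⁻¹ ∑_b ∂_bΦ ∂_b∂_aΦ` cancel against `½ Φ⁻¹ ∂_a‖∇Φ‖²` by the symmetry of second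
derivatives. The Prague equation says exactly that `(c²/4πG)(ΔΦ/Φ - ‖∇Φ‖²/(2Φ²)) = ρ`. -/

lemma hasFDerivAt_one_div {E : Type*} [NormedAddCommGroup E] [NormedSpace ℝ E] {f : E → ℝ}
    {x : E} (hf : DifferentiableAt ℝ f x) (hx : f x ≠ 0) :
    HasFDerivAt (fun y => 1 / f y) (-(f x ^ 2)⁻¹ • fderiv ℝ f x) x := by
  simp only [one_div]
  exact (hasDerivAt_inv hx).comp_hasFDerivAt x hf.hasFDerivAt

section PartialDerivatives

variable {f g : EuclideanSpace ℝ (Fin 3) → ℝ} {x : EuclideanSpace ℝ (Fin 3)} {i : Fin 3}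

lemma pderiv3_mul (hf : DifferentiableAt ℝ f x) (hg : DifferentiableAt ℝ g x) :
    pderiv3 i (fun y => f y * g y) x = pderiv3 i f x * g x + f x * pderiv3 i g x := by
  simp [pderiv3, fderiv_fun_mul hf hg]
  ring

lemma pderiv3_const_mul (hf : DifferentiableAt ℝ f x) (k : ℝ) :
    pderiv3 i (fun y => k * f y) x = k * pderiv3 i f x := by
  simp [pderiv3, fderiv_const_mul hf]

lemma pderiv3_sub (hf : DifferentiableAt ℝ f x) (hg : DifferentiableAt ℝ g x) :
    pderiv3 i (fun y => f y - g y) x = pderiv3 i f x - pderiv3 i g x := by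
  simp [pderiv3, fderiv_fun_sub hf hg]

lemma pderiv3_one_div (hf : DifferentiableAt ℝ f x) (hx : f x ≠ 0) :
    pderiv3 i (fun y => 1 / f y) x = -pderiv3 i f x / f x ^ 2 := by
  simp only [pderiv3, (hasFDerivAt_one_div hf hx).fderiv]
  simp
  ring

lemma pderiv3_sq (hf : DifferentiableAt ℝ f x) :
    pderiv3 i (fun y => f y ^ 2) x = 2 * (f x * pderiv3 i f x) := by
  simp only [sq, pderiv3_mul hf hf]
  ring

lemma pderiv3_sum {ι : Type*} {s : Finset ι} {u : ι → EuclideanSpace ℝ (Fin 3) → ℝ}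
    (hu : ∀ j ∈ s, DifferentiableAt ℝ (u j) x) :
    pderiv3 i (fun y => ∑ j ∈ s, u j y) x = ∑ j ∈ s, pderiv3 i (u j) x := by
  simp [pderiv3, fderiv_fun_sum hu]

variable (i)

lemma differentiableAt_pderiv3 (hf : ContDiff ℝ 2 f) : DifferentiableAt ℝ (pderiv3 i f) x :=
  ((hf.fderiv_right (m := 1) le_rfl).differentiable one_ne_zero x).clm_apply
    (differentiableAt_const _)

lemma pderiv3_pderiv3_eq_fderiv_fderiv (hf : ContDiff ℝ 2 f) (j : Fin 3) :
    pderiv3 i (pderiv3 j f) x =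
      fderiv ℝ (fderiv ℝ f) x (EuclideanSpace.single i 1) (EuclideanSpace.single j 1) := by
  have hdf := (hf.fderiv_right (m := 1) le_rfl).differentiable one_ne_zero x
  rw [pderiv3, show pderiv3 j f = fun y => fderiv ℝ f y (EuclideanSpace.single j 1) from rfl,
    fderiv_clm_apply hdf (differentiableAt_const _)]
  simp

lemma pderiv3_pderiv3_comm (hf : ContDiff ℝ 2 f) (j : Fin 3) :
    pderiv3 i (pderiv3 j f) x = pderiv3 j (pderiv3 i f) x := by
  simp only [pderiv3_pderiv3_eq_fderiv_fderiv _ hf]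
  exact hf.contDiffAt.isSymmSndFDerivAt (by simp) _ _

lemma differentiableAt_gradSq3 (hf : ContDiff ℝ 2 f) : DifferentiableAt ℝ (gradSq3 f) x :=
  DifferentiableAt.fun_sum fun j _ => (differentiableAt_pderiv3 j hf).pow 2

lemma pderiv3_gradSq3 (hf : ContDiff ℝ 2 f) :
    pderiv3 i (gradSq3 f) x = 2 * ∑ j, pderiv3 j f x * pderiv3 i (pderiv3 j f) x := by
  rw [show gradSq3 f = fun y => ∑ j, pderiv3 j f y ^ 2 from rfl,
    pderiv3_sum (u := fun j y => pderiv3 j f y ^ 2)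
      fun j _ => (differentiableAt_pderiv3 j hf).pow 2, Finset.mul_sum]
  simp only [pderiv3_sq (differentiableAt_pderiv3 _ hf)]

end PartialDerivatives

/-- The tensor `t_{ab}` without its factor `c²/(4πG)`. -/
noncomputable def stress3 (f : EuclideanSpace ℝ (Fin 3) → ℝ) (a b : Fin 3)
    (y : EuclideanSpace ℝ (Fin 3)) : ℝ :=
  1 / f y * (pderiv3 a f y * pderiv3 b f y - 1 / 2 * (if a = b then 1 else 0) * gradSq3 f y)

section Stress

variable {f : EuclideanSpace ℝ (Fin 3) → ℝ} {x : EuclideanSpace ℝ (Fin 3)}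

lemma differentiableAt_stress3 (hf : ContDiff ℝ 2 f) (hx : f x ≠ 0) (a b : Fin 3) :
    DifferentiableAt ℝ (stress3 f a b) x :=
  (hasFDerivAt_one_div (hf.differentiable two_ne_zero x) hx).differentiableAt.fun_mul
    (((differentiableAt_pderiv3 a hf).fun_mul (differentiableAt_pderiv3 b hf)).fun_sub
      ((differentiableAt_gradSq3 hf).const_mul _))

lemma pderiv3_stress3 (hf : ContDiff ℝ 2 f) (hx : f x ≠ 0) (a b : Fin 3) :
    pderiv3 b (stress3 f a b) x =
      pderiv3 b f x * pderiv3 a (pderiv3 b f) x / f x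
        + pderiv3 a f x / f x * pderiv3 b (pderiv3 b f) x
        - pderiv3 a f x / f x ^ 2 * pderiv3 b f x ^ 2
        + if a = b then
            gradSq3 f x * pderiv3 b f x / (2 * f x ^ 2) - pderiv3 b (gradSq3 f) x / (2 * f x)
          else 0 := by
  have hf1 : DifferentiableAt ℝ f x := hf.differentiable two_ne_zero x
  have hd := fun i => differentiableAt_pderiv3 (x := x) i hf
  have hS := differentiableAt_gradSq3 (x := x) hf
  have hab := (hd a).fun_mul (hd b)
  unfold stress3
  rw [pderiv3_mul (hasFDerivAt_one_div hf1 hx).differentiableAt (hab.fun_sub (hS.const_mul _)),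
    pderiv3_one_div hf1 hx, pderiv3_sub hab (hS.const_mul _), pderiv3_mul (hd a) (hd b),
    pderiv3_const_mul hS, pderiv3_pderiv3_comm b hf a]
  split_ifs <;> field_simp <;> ring

lemma sum_pderiv3_stress3 (hf : ContDiff ℝ 2 f) (hx : f x ≠ 0) (a : Fin 3) :
    ∑ b, pderiv3 b (stress3 f a b) x =
      pderiv3 a f x * (lap3 f x / f x - gradSq3 f x / (2 * f x ^ 2)) := by
  simp only [pderiv3_stress3 hf hx, Finset.sum_add_distrib, Finset.sum_sub_distrib,
    Finset.sum_ite_eq, Finset.mem_univ, if_true, ← Finset.mul_sum, ← Finset.sum_div]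
  rw [pderiv3_gradSq3 a hf]
  simp only [lap3, gradSq3]
  field_simp
  ring

end Stress

theorem prague_force_is_divergence_of_stress_general
    (G c : ℝ) (hG : 0 < G) (hc : 0 < c)
    (ρ Φ : EuclideanSpace ℝ (Fin 3) → ℝ)
    (hΦ : ContDiff ℝ 3 Φ) (hΦpos : ∀ x, 0 < Φ x)
    (heq : ∀ x, lap3 Φ x =
      (4 * π * G / c ^ 2) *
        (ρ x * Φ x + (c ^ 2 / (8 * π * G)) * gradSq3 Φ x / Φ x)) :
    ∀ (a : Fin 3) (x : EuclideanSpace ℝ (Fin 3)),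
      (∑ b, pderiv3 b
        (fun y => (c ^ 2 / (4 * π * G)) * (1 / Φ y) *
          (pderiv3 a Φ y * pderiv3 b Φ y -
            (1 / 2) * (if a = b then (1:ℝ) else 0) * gradSq3 Φ y)) x)
      = ρ x * pderiv3 a Φ x := by
  intro a x
  have hΦ2 : ContDiff ℝ 2 Φ := hΦ.of_le (by norm_num)
  have hx : Φ x ≠ 0 := (hΦpos x).ne'
  have ht : ∀ b, (fun y => (c ^ 2 / (4 * π * G)) * (1 / Φ y) *
        (pderiv3 a Φ y * pderiv3 b Φ y - (1 / 2) * (if a = b then (1:ℝ) else 0) * gradSq3 Φ y))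
      = fun y => (c ^ 2 / (4 * π * G)) * stress3 Φ a b y :=
    fun b => funext fun y => by rw [stress3, mul_assoc]
  calc _ = (c ^ 2 / (4 * π * G)) * ∑ b, pderiv3 b (stress3 Φ a b) x := by
        simp only [ht, pderiv3_const_mul (differentiableAt_stress3 hΦ2 hx a _), Finset.mul_sum]
    _ = (c ^ 2 / (4 * π * G)) *
          (pderiv3 a Φ x * (lap3 Φ x / Φ x - gradSq3 Φ x / (2 * Φ x ^ 2))) := by
        rw [sum_pderiv3_stress3 hΦ2 hx]
    _ = ρ x * pderiv3 a Φ x := by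
        rw [heq x]
        field_simp
        ring

/-- For a `C³` positive solution `Φ` of the Prague field
equation with continuous source `ρ`, the force density `f_a = −ρ∂_aΦ`
is minus the divergence of the symmetric stress tensor
`t_{ab} = (c²/(4πG))·(1/Φ)·[∂_aΦ∂_bΦ − ½δ_{ab}‖∇Φ‖²]`, i.e.
`∑_b ∂_b t_{ab} = ρ·∂_aΦ`. -/
theorem prague_force_is_divergence_of_stress
    (G c : ℝ) (hG : 0 < G) (hc : 0 < c)
    (ρ Φ : EuclideanSpace ℝ (Fin 3) → ℝ)
    (hρ : Continuous ρ)
    (hΦ : ContDiff ℝ 3 Φ) (hΦpos : ∀ x, 0 < Φ x)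
    (heq : ∀ x, lap3 Φ x =
      (4 * π * G / c ^ 2) *
        (ρ x * Φ x + (c ^ 2 / (8 * π * G)) * gradSq3 Φ x / Φ x)) :
    ∀ (a : Fin 3) (x : EuclideanSpace ℝ (Fin 3)),
      (∑ b, pderiv3 b
        (fun y => (c ^ 2 / (4 * π * G)) * (1 / Φ y) *
          (pderiv3 a Φ y * pderiv3 b Φ y -
            (1 / 2) * (if a = b then (1:ℝ) else 0) * gradSq3 Φ y)) x)
      = ρ x * pderiv3 a Φ x :=
  prague_force_is_divergence_of_stress_general G c hG hc ρ Φ hΦ hΦpos heq
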